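/- arXiv:2206.06151 — 4 statements merged into one kernel-verified Lean document; each statement's English description precedes it below -/
import Mathlib

section
/- Let S_Y = R/I_Y be the homogeneous coordinate ring of a nondegenerate projective variety, λ = a/f a fake linear form on Y with a, f ∈ S_Y homogeneous, deg a = deg f + 1, and let X be defined by the kernel of φ: R[x_0] → Frac(S_Y), φ(x_0) = λ. Then the first partial elimination quotient satisfies K_1(I_X)/K_0(I_X) = ((f) : a) in S_Y, i.e., it equals the ideal of denominators D(λ) = {g ∈ S_Y : gλ ∈ S_Y}. -/
set_option synthInstance.maxHeartbeats 1000000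
set_option maxHeartbeats 1000000

open MvPolynomial Polynomial

/-- Elements of `J ⊆ R[x₀]` of `x₀`-degree at most `i`. -/
noncomputable def Ktilde {k : Type} [Field k] {σ : Type}
    (J : Ideal (Polynomial (MvPolynomial σ k))) (i : ℕ) :
    Submodule (MvPolynomial σ k) (Polynomial (MvPolynomial σ k)) :=
  (Submodule.restrictScalars (MvPolynomial σ k) J) ⊓ Polynomial.degreeLE _ (i : ℕ)

/-- The `i`-th partial elimination ideal of `J`. -/
noncomputable def pei {k : Type} [Field k] {σ : Type}
    (J : Ideal (Polynomial (MvPolynomial σ k))) (i : ℕ) :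
    Ideal (MvPolynomial σ k) :=
  Submodule.map (Polynomial.lcoeff _ i) (Ktilde J i)

/-- In the unprojection setting (`S_Y = R/I_Y` a domain,
`λ = ā/f̄` a fake linear form with `deg a = deg f + 1`, and
`I_X = ker (φ : R[x₀] → Frac(S_Y)), φ(x₀) = λ`), the first partial elimination
quotient satisfies `K₁(I_X)/K₀(I_X) = ((f̄) : ā)` in `S_Y`, i.e. it equals the
ideal of denominators `D(λ) = {g ∈ S_Y : gλ ∈ S_Y}`. -/
theorem unprojection_first_pei
    {k : Type} [Field k] {σ : Type}
    (IY : Ideal (MvPolynomial σ k))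
    (hIYprime : IY.IsPrime)
    (hIYhom : ∀ f ∈ IY, ∀ n, homogeneousComponent n f ∈ IY)
    (hIYlin : ∀ f ∈ IY, f.IsHomogeneous 1 → f = 0)
    (lam : FractionRing (MvPolynomial σ k ⧸ IY))
    (a f : MvPolynomial σ k) (d : ℕ)
    (ha : a.IsHomogeneous (d + 1)) (hf : f.IsHomogeneous d) (hfY : f ∉ IY)
    (hrep : lam * algebraMap (MvPolynomial σ k ⧸ IY) _ (Ideal.Quotient.mk IY f)
      = algebraMap (MvPolynomial σ k ⧸ IY) _ (Ideal.Quotient.mk IY a))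
    (hfake : lam ∉ (algebraMap (MvPolynomial σ k ⧸ IY)
      (FractionRing (MvPolynomial σ k ⧸ IY))).range)
    (φ : Polynomial (MvPolynomial σ k) →+* FractionRing (MvPolynomial σ k ⧸ IY))
    (hφ : φ = Polynomial.eval₂RingHom
      ((algebraMap (MvPolynomial σ k ⧸ IY) (FractionRing (MvPolynomial σ k ⧸ IY))).comp
        (Ideal.Quotient.mk IY)) lam) :
    Ideal.map (Ideal.Quotient.mk IY) (pei (RingHom.ker φ) 1)
      = Submodule.colon (Ideal.span {Ideal.Quotient.mk IY f}) (Ideal.span {Ideal.Quotient.mk IY a}) ∧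
    (∀ g : MvPolynomial σ k ⧸ IY,
      g ∈ Ideal.map (Ideal.Quotient.mk IY) (pei (RingHom.ker φ) 1) ↔
        algebraMap (MvPolynomial σ k ⧸ IY) (FractionRing (MvPolynomial σ k ⧸ IY)) g * lam
          ∈ (algebraMap (MvPolynomial σ k ⧸ IY) (FractionRing (MvPolynomial σ k ⧸ IY))).range) := by
  haveI : IY.IsPrime := hIYprime
  classical
  set ψ := algebraMap (MvPolynomial σ k ⧸ IY) (FractionRing (MvPolynomial σ k ⧸ IY)) with hψ
  set mk := Ideal.Quotient.mk IY with hmkdef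
  have hinj : Function.Injective ψ :=
    IsFractionRing.injective (MvPolynomial σ k ⧸ IY) (FractionRing (MvPolynomial σ k ⧸ IY))
  have hf0 : mk f ≠ 0 := by
    simpa [hmkdef, Ideal.Quotient.eq_zero_iff_mem] using hfY
  have hψf0 : ψ (mk f) ≠ 0 := fun h => hf0 (hinj (by simpa using h))
  -- characterization of the ideal of denominators as a colon ideal
  have hD : ∀ g : MvPolynomial σ k ⧸ IY,
      g ∈ Submodule.colon (Ideal.span {mk f}) (Ideal.span {mk a}) ↔
      ψ g * lam ∈ ψ.range := by
    intro g
    rw [show Submodule.colon (Ideal.span {mk f}) (Ideal.span {mk a})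
        = (Ideal.span {mk f}).colon (Ideal.span {mk a}) from rfl]
    rw [Ideal.mem_colon_span_singleton, Ideal.mem_span_singleton']
    constructor
    · rintro ⟨c, hc⟩
      refine ⟨c, mul_right_cancel₀ hψf0 ?_⟩
      rw [mul_assoc, hrep, ← map_mul, ← map_mul, ← hc]
    · rintro ⟨c, hc⟩
      refine ⟨c, hinj ?_⟩
      rw [map_mul, map_mul, hc, mul_assoc, hrep]
  -- the main equality
  have hmain : Ideal.map mk (pei (RingHom.ker φ) 1)
      = Submodule.colon (Ideal.span {mk f}) (Ideal.span {mk a}) := by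
    apply le_antisymm
    · rw [Ideal.map_le_iff_le_comap]
      intro g hg
      obtain ⟨P, hP, hcoeff⟩ := hg
      obtain ⟨hPker, hPdeg⟩ := Submodule.mem_inf.1 hP
      have hdeg : P.natDegree ≤ 1 :=
        Polynomial.natDegree_le_iff_degree_le.2 (Polynomial.mem_degreeLE.1 hPdeg)
      obtain ⟨c₁, c₀, hPeq⟩ := Polynomial.exists_eq_X_add_C_of_natDegree_le_one hdeg
      have hc₁ : c₁ = g := by
        simpa [hPeq] using hcoeff
      have hker : Polynomial.eval₂ (ψ.comp mk) lam P = 0 := by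
        have := Submodule.restrictScalars_mem (MvPolynomial σ k) _ _ |>.mp hPker
        rw [RingHom.mem_ker, hφ] at this
        rw [← Polynomial.coe_eval₂RingHom]
        exact this
      have heval : ψ (mk c₁) * lam + ψ (mk c₀) = 0 := by
        rw [hPeq] at hker
        simp only [Polynomial.eval₂_add, Polynomial.eval₂_mul, Polynomial.eval₂_C,
          Polynomial.eval₂_X, RingHom.comp_apply] at hker
        exact hker
      have hmemrange : ψ (mk g) * lam ∈ ψ.range := by
        refine ⟨-(mk c₀), ?_⟩
        rw [map_neg, ← hc₁]
        exact (eq_neg_of_add_eq_zero_left heval).symm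
      exact Ideal.mem_comap.2 ((hD (mk g)).2 hmemrange)
    · intro g hg
      obtain ⟨h, hh⟩ := (hD g).1 hg
      obtain ⟨g', rfl⟩ := Ideal.Quotient.mk_surjective g
      obtain ⟨h', rfl⟩ := Ideal.Quotient.mk_surjective h
      have hPker : Polynomial.C g' * Polynomial.X - Polynomial.C h' ∈ RingHom.ker φ := by
        rw [RingHom.mem_ker, hφ]
        rw [show ((Polynomial.eval₂RingHom (ψ.comp mk) lam)
            (Polynomial.C g' * Polynomial.X - Polynomial.C h'))
          = Polynomial.eval₂ (ψ.comp mk) lam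
            (Polynomial.C g' * Polynomial.X - Polynomial.C h') from rfl]
        simp only [Polynomial.eval₂_sub, Polynomial.eval₂_mul, Polynomial.eval₂_C,
          Polynomial.eval₂_X, RingHom.comp_apply]
        rw [← hh]
        ring
      have hPdeg : Polynomial.C g' * Polynomial.X - Polynomial.C h'
          ∈ Polynomial.degreeLE (MvPolynomial σ k) ((1 : ℕ) : WithBot ℕ) := by
        rw [Polynomial.mem_degreeLE]
        rw [Nat.cast_one]
        refine le_trans (Polynomial.degree_sub_le _ _) (max_le ?_ ?_)
        · refine le_trans (Polynomial.degree_mul_le _ _) ?_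
          refine le_trans (add_le_add Polynomial.degree_C_le Polynomial.degree_X_le) ?_
          rw [zero_add]
        · exact le_trans Polynomial.degree_C_le (by norm_num)
      have hmem : g' ∈ pei (RingHom.ker φ) 1 := by
        refine ⟨Polynomial.C g' * Polynomial.X - Polynomial.C h',
          Submodule.mem_inf.2 ⟨Submodule.restrictScalars_mem _ _ _ |>.mpr hPker, hPdeg⟩, ?_⟩
        simp [Polynomial.coeff_C]
      exact Ideal.mem_map_of_mem mk hmem
  refine ⟨hmain, fun g => ?_⟩
  rw [hmain]
  exact hD g
end

section
/- In the unprojection setting, for every i ≥ 1 the quotient of partial elimination ideals satisfies K_i(I_X)/K_0(I_X) = (f·(a,f)^{i-1} : a^i) as ideals of S_Y. -/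
set_option synthInstance.maxHeartbeats 1000000
set_option maxHeartbeats 1000000

open MvPolynomial Polynomial

lemma aux_mem_pow {R : Type*} [CommRing R] (a f : R) {j m : ℕ} (hj : j ≤ m) :
    a ^ j * f ^ (m - j) ∈ Ideal.span {a, f} ^ m := by
  have ha : a ∈ Ideal.span {a, f} := Ideal.subset_span (by simp)
  have hf : f ∈ Ideal.span {a, f} := Ideal.subset_span (by simp)
  have := Ideal.mul_mem_mul (Ideal.pow_mem_pow ha j) (Ideal.pow_mem_pow hf (m - j))
  rwa [← pow_add, Nat.add_sub_cancel' hj] at this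

lemma aux_mem_J {R : Type*} [CommRing R] (a f : R) {j m : ℕ} (hj : j ≤ m) :
    a ^ j * f ^ (m + 1 - j) ∈ Ideal.span {f} * Ideal.span {a, f} ^ m := by
  have h1 : a ^ j * f ^ (m + 1 - j) = f * (a ^ j * f ^ (m - j)) := by
    rw [show m + 1 - j = (m - j) + 1 by omega]; ring
  rw [h1]
  exact Ideal.mul_mem_mul (Ideal.mem_span_singleton_self f) (aux_mem_pow a f hj)

lemma aux_pow_le {R : Type*} [CommRing R] (a f : R) (m : ℕ) :
    Ideal.span {a, f} ^ m
      ≤ Ideal.span (Set.range fun j : Fin (m + 1) => a ^ (j : ℕ) * f ^ (m - (j : ℕ))) := by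
  induction m with
  | zero =>
    rw [pow_zero, Ideal.one_eq_top, top_le_iff, Ideal.eq_top_iff_one]
    exact Ideal.subset_span ⟨0, by simp⟩
  | succ m ih =>
    rw [pow_succ, Ideal.mul_le]
    intro r hr s hs
    have hr' := ih hr
    rw [Ideal.mem_span_pair] at hs
    obtain ⟨u, v, rfl⟩ := hs
    have key : ∀ x ∈ Ideal.span (Set.range fun j : Fin (m + 1) => a ^ (j : ℕ) * f ^ (m - (j : ℕ))),
        x * a ∈ Ideal.span (Set.range fun j : Fin (m + 2) => a ^ (j : ℕ) * f ^ (m + 1 - (j : ℕ)))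
        ∧ x * f ∈ Ideal.span (Set.range fun j : Fin (m + 2) => a ^ (j : ℕ) * f ^ (m + 1 - (j : ℕ))) := by
      intro x hx
      induction hx using Submodule.span_induction with
      | mem x hx =>
        obtain ⟨j, rfl⟩ := hx
        constructor
        · apply Ideal.subset_span
          refine ⟨⟨(j : ℕ) + 1, by omega⟩, ?_⟩
          have : m + 1 - ((j : ℕ) + 1) = m - (j : ℕ) := by omega
          simp [this, pow_succ]; ring
        · apply Ideal.subset_span
          refine ⟨⟨(j : ℕ), by omega⟩, ?_⟩
          have : m + 1 - (j : ℕ) = (m - (j : ℕ)) + 1 := by omega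
          simp [this, pow_succ]; ring
      | zero => simp
      | add x y _ _ hx hy =>
        exact ⟨by rw [add_mul]; exact Ideal.add_mem _ hx.1 hy.1,
          by rw [add_mul]; exact Ideal.add_mem _ hx.2 hy.2⟩
      | smul c x _ hx =>
        exact ⟨by rw [smul_eq_mul, mul_assoc]; exact Ideal.mul_mem_left _ _ hx.1,
          by rw [smul_eq_mul, mul_assoc]; exact Ideal.mul_mem_left _ _ hx.2⟩
    rw [mul_add]
    refine Ideal.add_mem _ ?_ ?_
    · rw [show r * (u * a) = u * (r * a) by ring]
      exact Ideal.mul_mem_left _ _ (key r hr').1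
    · rw [show r * (v * f) = v * (r * f) by ring]
      exact Ideal.mul_mem_left _ _ (key r hr').2

lemma aux_J_le {R : Type*} [CommRing R] (a f : R) (m : ℕ) :
    Ideal.span {f} * Ideal.span {a, f} ^ m
      ≤ Ideal.span (Set.range fun j : Fin (m + 1) => a ^ (j : ℕ) * f ^ (m + 1 - (j : ℕ))) := by
  rw [Ideal.mul_le]
  intro r hr s hs
  rw [Ideal.mem_span_singleton] at hr
  obtain ⟨t, rfl⟩ := hr
  have hs' := aux_pow_le a f m hs
  clear hs
  rw [mul_comm f t, mul_assoc]
  apply Ideal.mul_mem_left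
  induction hs' using Submodule.span_induction with
  | mem x hx =>
    obtain ⟨j, rfl⟩ := hx
    apply Ideal.subset_span
    refine ⟨j, ?_⟩
    have : m + 1 - (j : ℕ) = (m - (j : ℕ)) + 1 := by omega
    simp [this, pow_succ]; ring
  | zero => simp
  | add x y _ _ hx hy => rw [mul_add]; exact Ideal.add_mem _ hx hy
  | smul c x _ hx =>
    rw [smul_eq_mul, ← mul_assoc, mul_comm f c, mul_assoc]
    exact Ideal.mul_mem_left _ _ hx


/-- In the unprojection setting, for every `i ≥ 1` the
quotient of partial elimination ideals satisfies
`K_i(I_X)/K₀(I_X) = (f·(a,f)^{i-1} : aⁱ)` as ideals of `S_Y`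
(stated as: the image of `K_i(I_X)` in `S_Y = R/I_Y` equals the ideal
quotient `(f̄·(ā,f̄)^{i-1} : āⁱ)`; recall `K₀(I_X) = I_Y`). -/
theorem unprojection_pei_colon
    {k : Type} [Field k] {σ : Type}
    (IY : Ideal (MvPolynomial σ k))
    (hIYprime : IY.IsPrime)
    (hIYhom : ∀ f ∈ IY, ∀ n, homogeneousComponent n f ∈ IY)
    (hIYlin : ∀ f ∈ IY, f.IsHomogeneous 1 → f = 0)
    (lam : FractionRing (MvPolynomial σ k ⧸ IY))
    (a f : MvPolynomial σ k) (d : ℕ)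
    (ha : a.IsHomogeneous (d + 1)) (hf : f.IsHomogeneous d) (hfY : f ∉ IY)
    (hrep : lam * algebraMap (MvPolynomial σ k ⧸ IY) _ (Ideal.Quotient.mk IY f)
      = algebraMap (MvPolynomial σ k ⧸ IY) _ (Ideal.Quotient.mk IY a))
    (hfake : lam ∉ (algebraMap (MvPolynomial σ k ⧸ IY)
      (FractionRing (MvPolynomial σ k ⧸ IY))).range)
    (φ : Polynomial (MvPolynomial σ k) →+* FractionRing (MvPolynomial σ k ⧸ IY))
    (hφ : φ = Polynomial.eval₂RingHom
      ((algebraMap (MvPolynomial σ k ⧸ IY) (FractionRing (MvPolynomial σ k ⧸ IY))).comp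
        (Ideal.Quotient.mk IY)) lam) :
    ∀ i : ℕ, 1 ≤ i →
      Ideal.map (Ideal.Quotient.mk IY) (pei (RingHom.ker φ) i)
        = Submodule.colon
            (Ideal.span {Ideal.Quotient.mk IY f}
              * (Ideal.span {Ideal.Quotient.mk IY a, Ideal.Quotient.mk IY f}) ^ (i - 1))
            (Ideal.span {(Ideal.Quotient.mk IY a) ^ i}) := by
  subst hφ
  haveI := hIYprime
  intro i hi
  obtain ⟨m, rfl⟩ : ∃ m, i = m + 1 := ⟨i - 1, by omega⟩
  simp only [Nat.add_sub_cancel]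
  set mk : MvPolynomial σ k →+* (MvPolynomial σ k ⧸ IY) := Ideal.Quotient.mk IY with hmk
  set ι : (MvPolynomial σ k ⧸ IY) →+* FractionRing (MvPolynomial σ k ⧸ IY) :=
    (algebraMap (MvPolynomial σ k ⧸ IY) (FractionRing (MvPolynomial σ k ⧸ IY))) with hι
  have hinj : Function.Injective ι :=
    IsFractionRing.injective (MvPolynomial σ k ⧸ IY) (FractionRing (MvPolynomial σ k ⧸ IY))
  have hfne : ι (mk f) ≠ 0 := by
    intro h
    apply hfY
    rw [← map_zero ι] at h
    have := hinj h
    rwa [hmk, Ideal.Quotient.eq_zero_iff_mem] at this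
  have hpow : ∀ {j n : ℕ}, j ≤ n →
      lam ^ j * ι (mk f) ^ n = ι (mk a) ^ j * ι (mk f) ^ (n - j) := by
    intro j n hj
    calc lam ^ j * ι (mk f) ^ n = (lam * ι (mk f)) ^ j * ι (mk f) ^ (n - j) := by
          rw [mul_pow, mul_assoc, ← pow_add, Nat.add_sub_cancel' hj]
      _ = ι (mk a) ^ j * ι (mk f) ^ (n - j) := by rw [hrep]
  have key : ∀ p : Polynomial (MvPolynomial σ k), p.natDegree < m + 2 →
      Polynomial.eval₂ (ι.comp mk) lam p * ι (mk f) ^ (m + 1)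
        = ∑ j ∈ Finset.range (m + 2), ι (mk (p.coeff j)) * (ι (mk a) ^ j * ι (mk f) ^ (m + 1 - j)) := by
    intro p hp
    rw [Polynomial.eval₂_eq_sum_range' _ hp, Finset.sum_mul]
    apply Finset.sum_congr rfl
    intro j hj
    rw [Finset.mem_range] at hj
    have hj' : j ≤ m + 1 := by omega
    rw [mul_assoc, hpow hj', RingHom.comp_apply]
  apply le_antisymm
  · rw [Ideal.map_le_iff_le_comap]
    intro c hc
    simp only [pei, Ktilde, Submodule.mem_map, Submodule.mem_inf,
      Submodule.restrictScalars_mem] at hc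
    obtain ⟨p, ⟨hker, hdeg⟩, rfl⟩ := hc
    rw [Polynomial.mem_degreeLE] at hdeg
    have hnd : p.natDegree < m + 2 := by
      have := Polynomial.natDegree_le_iff_degree_le.mpr hdeg
      omega
    rw [RingHom.mem_ker] at hker
    rw [Polynomial.coe_eval₂RingHom] at hker
    have h0 := key p hnd
    rw [hker, zero_mul] at h0
    have h1 : ∑ j ∈ Finset.range (m + 2), mk (p.coeff j) * (mk a ^ j * mk f ^ (m + 1 - j)) = 0 := by
      apply hinj
      rw [map_zero, map_sum]
      rw [h0]
      apply Finset.sum_congr rfl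
      intro j _
      simp [map_mul, map_pow]
    rw [Finset.sum_range_succ] at h1
    have h2 : mk (p.coeff (m + 1)) * mk a ^ (m + 1)
        = - ∑ j ∈ Finset.range (m + 1), mk (p.coeff j) * (mk a ^ j * mk f ^ (m + 1 - j)) := by
      have : mk (p.coeff (m+1)) * (mk a ^ (m+1) * mk f ^ (m + 1 - (m+1)))
          = mk (p.coeff (m+1)) * mk a ^ (m+1) := by simp
      rw [this] at h1
      linear_combination h1
    rw [Ideal.mem_comap, Polynomial.lcoeff_apply, Ideal.mem_colon_span_singleton, h2]
    apply neg_mem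
    apply Ideal.sum_mem
    intro j hj
    rw [Finset.mem_range] at hj
    exact Ideal.mul_mem_left _ _ (aux_mem_J (mk a) (mk f) (by omega))
  · intro x hx
    obtain ⟨c, rfl⟩ := Ideal.Quotient.mk_surjective x
    rw [Ideal.mem_colon_span_singleton] at hx
    have hx2 := aux_J_le (mk a) (mk f) m hx
    rw [← Ideal.submodule_span_eq, Submodule.mem_span_range_iff_exists_fun] at hx2
    obtain ⟨e, he⟩ := hx2
    choose E hE using fun j => Ideal.Quotient.mk_surjective (e j)
    set p : Polynomial (MvPolynomial σ k) :=
      Polynomial.C c * Polynomial.X ^ (m + 1)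
        - ∑ j : Fin (m + 1), Polynomial.C (E j) * Polynomial.X ^ (j : ℕ) with hpdef
    have hcoeff : p.coeff (m + 1) = c := by
      rw [hpdef]
      have h2 : ∀ j : Fin (m + 1), E j * (if m + 1 = (j : ℕ) then (1 : MvPolynomial σ k) else 0) = 0 := by
        intro j
        rw [if_neg (by omega), mul_zero]
      simp [Polynomial.coeff_sub, Polynomial.coeff_C_mul, Polynomial.coeff_X_pow,
        Polynomial.finset_sum_coeff, h2]
    have hdeg : p.degree ≤ (m + 1 : ℕ) := by
      rw [hpdef]
      apply le_trans (Polynomial.degree_sub_le _ _)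
      rw [max_le_iff]
      constructor
      · exact le_trans (Polynomial.degree_C_mul_X_pow_le _ _) le_rfl
      · apply le_trans (Polynomial.degree_sum_le _ _)
        apply Finset.sup_le
        intro j _
        apply le_trans (Polynomial.degree_C_mul_X_pow_le _ _)
        exact_mod_cast (by omega : (j : ℕ) ≤ m + 1)
    have hker : Polynomial.eval₂ (ι.comp mk) lam p = 0 := by
      have hnd : p.natDegree < m + 2 := by
        have := Polynomial.natDegree_le_iff_degree_le.mpr hdeg
        omega
      have hmul := key p hnd
      have hval : ∑ j ∈ Finset.range (m + 2), ι (mk (p.coeff j)) * (ι (mk a) ^ j * ι (mk f) ^ (m + 1 - j)) = 0 := by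
        have hq : ∑ j ∈ Finset.range (m + 2), mk (p.coeff j) * (mk a ^ j * mk f ^ (m + 1 - j)) = 0 := by
          rw [Finset.sum_range_succ, hcoeff]
          have hterm : mk c * (mk a ^ (m+1) * mk f ^ (m + 1 - (m+1))) = mk c * mk a ^ (m+1) := by simp
          rw [hterm]
          have hsum : ∑ j ∈ Finset.range (m + 1), mk (p.coeff j) * (mk a ^ j * mk f ^ (m + 1 - j))
              = - (mk c * mk a ^ (m+1)) := by
            rw [← he]
            rw [← Fin.sum_univ_eq_sum_range (fun j => mk (p.coeff j) * (mk a ^ j * mk f ^ (m + 1 - j)))]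
            rw [← Finset.sum_neg_distrib]
            apply Finset.sum_congr rfl
            intro j _
            have hcj : p.coeff (j : ℕ) = - E j := by
              rw [hpdef]
              simp only [Polynomial.coeff_sub, Polynomial.coeff_C_mul, Polynomial.coeff_X_pow,
                Polynomial.finset_sum_coeff]
              rw [if_neg (by omega)]
              rw [Finset.sum_eq_single j]
              · simp
              · intro b _ hb
                rw [if_neg, mul_zero]
                intro hbj
                apply hb
                exact Fin.ext (by omega)
              · simp
            rw [hcj, map_neg, hE j, smul_eq_mul]
            ring
          rw [hsum]
          ring
        calc ∑ j ∈ Finset.range (m + 2), ι (mk (p.coeff j)) * (ι (mk a) ^ j * ι (mk f) ^ (m + 1 - j))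
            = ι (∑ j ∈ Finset.range (m + 2), mk (p.coeff j) * (mk a ^ j * mk f ^ (m + 1 - j))) := by
              rw [map_sum]
              apply Finset.sum_congr rfl
              intro j _
              simp [map_mul, map_pow]
          _ = 0 := by rw [hq, map_zero]
      rw [hval] at hmul
      rcases mul_eq_zero.mp hmul with h | h
      · exact h
      · exact absurd (pow_eq_zero_iff (by omega) |>.mp h) hfne
    apply Ideal.mem_map_of_mem
    simp only [pei, Ktilde, Submodule.mem_map, Submodule.mem_inf, Submodule.restrictScalars_mem]
    refine ⟨p, ⟨?_, ?_⟩, ?_⟩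
    · rw [RingHom.mem_ker, Polynomial.coe_eval₂RingHom]
      exact hker
    · rw [Polynomial.mem_degreeLE]
      exact_mod_cast hdeg
    · rw [Polynomial.lcoeff_apply, hcoeff]
end

section
/- Let S_Y = R/I_Y be an integral domain and let f, a ∈ S_Y be a regular sequence of homogeneous elements with deg a = deg f + 1. Set λ = a/f and I_X = ker(φ: R[x_0] → Frac(S_Y), x_0 ↦ λ). Then K_1(I_X)/K_0(I_X) = (f) in S_Y, and K_i(I_X) = K_1(I_X) for all i ≥ 1; consequently the partial elimination modules M_i = (K_i/K_{i-1})(-i) vanish for all i ≥ 2 and M_1 ≅ S_Y(-deg f - 1) as graded R-modules. -/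
set_option synthInstance.maxHeartbeats 1000000
set_option maxHeartbeats 1000000

open MvPolynomial Polynomial

/-- If `f̄, ā` is a regular sequence of homogeneous elements
on the domain `S_Y = R/I_Y` with `deg a = deg f + 1`, `λ = ā/f̄ ∉ S_Y`, and
`I_X = ker (φ : R[x₀] → Frac(S_Y)), φ(x₀) ↦ λ`, then
`K₁(I_X)/K₀(I_X) = (f̄)` in `S_Y` and `K_i(I_X) = K₁(I_X)` for all `i ≥ 1`;
consequently the partial elimination modules `M_i` vanish for `i ≥ 2`
and `M₁ ≅ S_Y(-deg f - 1)` (an isomorphism of modules; the twist only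
affects the grading). -/
theorem unprojection_regular_sequence
    {k : Type} [Field k] {σ : Type}
    (IY : Ideal (MvPolynomial σ k))
    (hIYprime : IY.IsPrime)
    (hIYhom : ∀ f ∈ IY, ∀ n, homogeneousComponent n f ∈ IY)
    (hIYlin : ∀ f ∈ IY, f.IsHomogeneous 1 → f = 0)
    (lam : FractionRing (MvPolynomial σ k ⧸ IY))
    (a f : MvPolynomial σ k) (d : ℕ)
    (ha : a.IsHomogeneous (d + 1)) (hf : f.IsHomogeneous d)
    -- `f̄, ā` is a regular sequence on the domain `S_Y`:
    (hfne : Ideal.Quotient.mk IY f ≠ 0)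
    (hreg : ∀ g : MvPolynomial σ k ⧸ IY,
      Ideal.Quotient.mk IY a * g ∈ Ideal.span {Ideal.Quotient.mk IY f} →
        g ∈ Ideal.span {Ideal.Quotient.mk IY f})
    (hrep : lam * algebraMap (MvPolynomial σ k ⧸ IY) _ (Ideal.Quotient.mk IY f)
      = algebraMap (MvPolynomial σ k ⧸ IY) _ (Ideal.Quotient.mk IY a))
    (hfake : lam ∉ (algebraMap (MvPolynomial σ k ⧸ IY)
      (FractionRing (MvPolynomial σ k ⧸ IY))).range)
    (φ : Polynomial (MvPolynomial σ k) →+* FractionRing (MvPolynomial σ k ⧸ IY))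
    (hφ : φ = Polynomial.eval₂RingHom
      ((algebraMap (MvPolynomial σ k ⧸ IY) (FractionRing (MvPolynomial σ k ⧸ IY))).comp
        (Ideal.Quotient.mk IY)) lam) :
    Ideal.map (Ideal.Quotient.mk IY) (pei (RingHom.ker φ) 1)
        = Ideal.span {Ideal.Quotient.mk IY f} ∧
    (∀ i : ℕ, 1 ≤ i → pei (RingHom.ker φ) i = pei (RingHom.ker φ) 1) ∧
    Nonempty ((↥(Ideal.map (Ideal.Quotient.mk IY) (pei (RingHom.ker φ) 1)))
      ≃ₗ[MvPolynomial σ k ⧸ IY] (MvPolynomial σ k ⧸ IY)) := by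
  subst hφ
  haveI := hIYprime
  set mk : MvPolynomial σ k →+* MvPolynomial σ k ⧸ IY := Ideal.Quotient.mk IY with hmk
  set ψ : (MvPolynomial σ k ⧸ IY) →+* FractionRing (MvPolynomial σ k ⧸ IY) :=
    algebraMap (MvPolynomial σ k ⧸ IY) (FractionRing (MvPolynomial σ k ⧸ IY)) with hψ
  have hψinj : Function.Injective ψ :=
    IsFractionRing.injective (MvPolynomial σ k ⧸ IY) (FractionRing (MvPolynomial σ k ⧸ IY))
  set Φ : Polynomial (MvPolynomial σ k) →+* FractionRing (MvPolynomial σ k ⧸ IY) :=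
    Polynomial.eval₂RingHom (ψ.comp mk) lam with hΦ
  -- dividing by powers of `a`
  have step : ∀ n : ℕ, ∀ x : MvPolynomial σ k ⧸ IY, x * (mk a) ^ n ∈ Ideal.span {mk f} →
      x ∈ Ideal.span {mk f} := by
    intro n
    induction n with
    | zero => intro x hx; simpa using hx
    | succ n ih =>
      intro x hx
      apply ih
      apply hreg
      have h : mk a * (x * mk a ^ n) = x * mk a ^ (n + 1) := by ring
      rw [h]; exact hx
  -- Key: for i ≥ 1, pei (ker Φ) i = comap mk (span {mk f})
  have key : ∀ i : ℕ, 1 ≤ i →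
      pei (RingHom.ker Φ) i = Ideal.comap mk (Ideal.span {mk f}) := by
    intro i hi
    obtain ⟨n, rfl⟩ : ∃ n, i = n + 1 := ⟨i - 1, (Nat.succ_pred_eq_of_pos hi).symm⟩
    apply le_antisymm
    · -- ⊆
      rintro c ⟨p, hp, rfl⟩
      simp only [Ktilde, SetLike.mem_coe, Submodule.mem_inf,
        Submodule.restrictScalars_mem, Polynomial.mem_degreeLE] at hp
      obtain ⟨hker, hdeg⟩ := hp
      rw [RingHom.mem_ker] at hker
      rw [Ideal.mem_comap, Ideal.mem_span_singleton]
      have hnd : p.natDegree < n + 2 := by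
        by_cases hp0 : p = 0
        · simp [hp0]
        · have := Polynomial.natDegree_le_iff_degree_le.mpr hdeg
          omega
      have hsum : ∑ j ∈ Finset.range (n + 2), ψ (mk (p.coeff j)) * lam ^ j = 0 := by
        have h := Polynomial.eval₂_eq_sum_range' (ψ.comp mk) hnd lam
        rw [hΦ, Polynomial.coe_eval₂RingHom] at hker
        rw [hker] at h
        exact h.symm
      have h2 : ∑ j ∈ Finset.range (n + 2),
          mk (p.coeff j) * (mk a) ^ j * (mk f) ^ (n + 1 - j) = 0 := by
        apply hψinj
        rw [map_sum, map_zero]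
        have h3 := congrArg (· * ψ (mk f) ^ (n + 1)) hsum
        simp only [Finset.sum_mul, zero_mul] at h3
        rw [← h3]
        apply Finset.sum_congr rfl
        intro j hj
        have hji : j ≤ n + 1 := Nat.lt_succ_iff.mp (Finset.mem_range.mp hj)
        rw [map_mul, map_mul, map_pow, map_pow]
        calc ψ (mk (p.coeff j)) * ψ (mk a) ^ j * ψ (mk f) ^ (n + 1 - j)
            = ψ (mk (p.coeff j)) * (lam * ψ (mk f)) ^ j * ψ (mk f) ^ (n + 1 - j) := by
              rw [hrep]
          _ = ψ (mk (p.coeff j)) * lam ^ j * (ψ (mk f) ^ j * ψ (mk f) ^ (n + 1 - j)) := by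
              ring
          _ = ψ (mk (p.coeff j)) * lam ^ j * ψ (mk f) ^ (n + 1) := by
              rw [← pow_add, Nat.add_sub_cancel' hji]
      rw [Finset.sum_range_succ] at h2
      simp only [Nat.sub_self, pow_zero, mul_one] at h2
      have hmem : mk (p.coeff (n + 1)) * mk a ^ (n + 1) ∈ Ideal.span {mk f} := by
        have h4 : mk (p.coeff (n + 1)) * mk a ^ (n + 1)
            = -∑ j ∈ Finset.range (n + 1),
                mk (p.coeff j) * (mk a) ^ j * (mk f) ^ (n + 1 - j) := by
          linear_combination h2
        rw [h4]
        apply Submodule.neg_mem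
        apply Ideal.sum_mem
        intro j hj
        have hjn : j < n + 1 := Finset.mem_range.mp hj
        rw [Ideal.mem_span_singleton]
        exact Dvd.dvd.mul_left
          (dvd_pow_self (mk f) (by omega : n + 1 - j ≠ 0)) _
      have h5 := step (n + 1) _ hmem
      rw [Ideal.mem_span_singleton] at h5
      simpa [Polynomial.lcoeff_apply] using h5
    · -- ⊇
      intro c hc
      rw [Ideal.mem_comap, Ideal.mem_span_singleton] at hc
      obtain ⟨g, hg⟩ := hc
      obtain ⟨g₀, rfl⟩ := Ideal.Quotient.mk_surjective g
      refine ⟨Polynomial.C c * Polynomial.X ^ (n + 1)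
        - Polynomial.C (g₀ * a) * Polynomial.X ^ n, ?_, ?_⟩
      · simp only [Ktilde, SetLike.mem_coe, Submodule.mem_inf,
          Submodule.restrictScalars_mem, Polynomial.mem_degreeLE]
        constructor
        · rw [RingHom.mem_ker, hΦ, Polynomial.coe_eval₂RingHom]
          simp only [Polynomial.eval₂_sub, Polynomial.eval₂_mul, Polynomial.eval₂_C,
            Polynomial.eval₂_X_pow, RingHom.comp_apply, map_mul, hg]
          linear_combination (ψ (mk g₀) * lam ^ n) * hrep
        · refine le_trans (Polynomial.degree_sub_le _ _) (max_le ?_ ?_)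
          · exact Polynomial.degree_C_mul_X_pow_le _ _
          · exact le_trans (Polynomial.degree_C_mul_X_pow_le _ _) (by
              exact_mod_cast Nat.cast_le.mpr (Nat.le_succ n))
      · rw [Polynomial.lcoeff_apply, Polynomial.coeff_sub, Polynomial.coeff_C_mul,
          Polynomial.coeff_C_mul, Polynomial.coeff_X_pow, Polynomial.coeff_X_pow]
        simp
  have hpart1 : Ideal.map mk (pei (RingHom.ker Φ) 1) = Ideal.span {mk f} := by
    rw [key 1 le_rfl, Ideal.map_comap_of_surjective mk Ideal.Quotient.mk_surjective]
  refine ⟨hpart1, fun i hi => (key i hi).trans (key 1 le_rfl).symm, ?_⟩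
  rw [hpart1, ← Ideal.submodule_span_eq]
  exact ⟨(LinearEquiv.toSpanNonzeroSingleton (MvPolynomial σ k ⧸ IY)
    (MvPolynomial σ k ⧸ IY) (mk f) hfne).symm⟩
end

section
/- Let S_Y = R/I_Y be a graded domain, f, a ∈ S_Y homogeneous with deg a = deg f + 1 and a/f ∉ S_Y, λ = a/f, and I_X = ker(R[x_0] → Frac(S_Y), x_0 ↦ λ). For each i ≥ 1 there is a commutative diagram with exact rows: 0 → (R/K_i)(−i(deg f + 1)) →^{a^i} S_Y/(f·(a,f)^{i-1}) → S_Y/(a,f)^i → 0 and 0 → (S_Y/(a,f)^{i-1})(−deg f) →^{f} S_Y/(f·(a,f)^{i-1}) → S_Y/(f) → 0, where K_i = K_i(I_X) is the i-th partial elimination ideal. -/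
/-!
Write `α`, `β` for the images of `a`, `f` in `S_Y`. For a polynomial `q` of `x₀`-degree at most
`i`, the value of its degree-`i` homogenization at `(α, β)` is `q(λ) βⁱ`; as `β ≠ 0` in the domain
`S_Y`, `q ∈ I_X` iff this value vanishes. Since `(β)(α, β)^{i-1}` is exactly the set of such values
for polynomials of degree `< i`, splitting off the top coefficient shows that `x αⁱ ∈ (β)(α, β)^{i-1}`
iff `x` is the top coefficient of some `q ∈ I_X` of degree `≤ i`, i.e. `x ∈ K_i`. The remaining
claims are `(A + B)^{n+1} = A^{n+1} + B (A + B)^n` and cancellation of the nonzerodivisor `β`.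
-/

set_option synthInstance.maxHeartbeats 1000000
set_option maxHeartbeats 1000000

open MvPolynomial Polynomial

namespace Polynomial

variable {S : Type*} [CommRing S] {α β : S}

lemma eval_homogenize_C_mul_X_pow (c : S) (n : ℕ) :
    MvPolynomial.eval ![α, β] ((C c * X ^ n).homogenize n) = c * α ^ n := by
  simp [homogenize_C_mul, homogenize_X_pow le_rfl]

lemma eval_homogenize_succ_of_natDegree_le {p : S[X]} {n : ℕ} (hp : p.natDegree ≤ n) :
    MvPolynomial.eval ![α, β] (p.homogenize (n + 1)) =
      β * MvPolynomial.eval ![α, β] (p.homogenize n) := by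
  have h := homogenize_mul p 1 hp (natDegree_one.trans_le zero_le_one)
  rw [mul_one] at h
  simp [h, mul_comm]

lemma eval_homogenize_X_mul {p : S[X]} {n : ℕ} (hp : p.natDegree ≤ n) :
    MvPolynomial.eval ![α, β] ((X * p).homogenize (n + 1)) =
      α * MvPolynomial.eval ![α, β] (p.homogenize n) := by
  rw [add_comm, homogenize_mul X p natDegree_X_le hp]
  simp

lemma eval_homogenize_mem_span_pair_pow (p : S[X]) (n : ℕ) :
    MvPolynomial.eval ![α, β] (p.homogenize n) ∈ Ideal.span {α, β} ^ n := by
  induction p using Polynomial.induction_on' with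
  | add p q hp hq => simpa using add_mem hp hq
  | monomial k c =>
    rcases le_or_gt k n with hkn | hnk
    · rw [← C_mul_X_pow_eq_monomial, homogenize_C_mul, homogenize_X_pow hkn]
      have hα : α ∈ Ideal.span {α, β} := Ideal.subset_span (by simp)
      have hβ : β ∈ Ideal.span {α, β} := Ideal.subset_span (by simp)
      have := Ideal.mul_mem_mul (Ideal.pow_mem_pow hα k) (Ideal.pow_mem_pow hβ (n - k))
      rw [← pow_add, Nat.add_sub_cancel' hkn] at this
      simpa [mul_assoc] using Ideal.mul_mem_left _ c this
    · simp [homogenize_monomial_of_lt hnk]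

lemma exists_eval_homogenize_eq_of_mem_span_pair_pow {n : ℕ} {x : S}
    (hx : x ∈ Ideal.span {α, β} ^ n) :
    ∃ p : S[X], p.natDegree ≤ n ∧ MvPolynomial.eval ![α, β] (p.homogenize n) = x := by
  induction n generalizing x with
  | zero => exact ⟨C x, by simp⟩
  | succ n ih =>
    rw [pow_succ] at hx
    refine Submodule.mul_induction_on hx (fun m hm z hz => ?_) fun y z hy hz => ?_
    · obtain ⟨q, hq, rfl⟩ := ih hm
      obtain ⟨u, v, rfl⟩ := Ideal.mem_span_pair.mp hz
      have hXq : (X * q).natDegree ≤ n + 1 :=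
        natDegree_mul_le.trans (by have := natDegree_X_le (R := S); omega)
      refine ⟨C u * (X * q) + C v * q, natDegree_add_le_of_degree_le
        ((natDegree_C_mul_le _ _).trans hXq) ((natDegree_C_mul_le _ _).trans (by omega)), ?_⟩
      simp only [homogenize_add, homogenize_C_mul, map_add, map_mul, MvPolynomial.eval_C,
        eval_homogenize_X_mul hq, eval_homogenize_succ_of_natDegree_le hq]
      ring
    · obtain ⟨p, hp, rfl⟩ := hy
      obtain ⟨q, hq, rfl⟩ := hz
      exact ⟨p + q, natDegree_add_le_of_degree_le hp hq, by simp⟩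

lemma natDegree_sub_C_coeff_mul_X_pow_le {p : S[X]} {n : ℕ} (hp : p.natDegree ≤ n + 1) :
    (p - C (p.coeff (n + 1)) * X ^ (n + 1)).natDegree ≤ n := by
  rw [natDegree_le_iff_coeff_eq_zero]
  intro N hN
  rcases (Nat.succ_le_of_lt hN).eq_or_lt with rfl | hlt
  · simp
  · simp [coeff_eq_zero_of_natDegree_lt (hp.trans_lt hlt), coeff_X_pow, hlt.ne']

lemma mem_colon_span_pow_iff_exists_homogenize {n : ℕ} {x : S} :
    x ∈ (Ideal.span {β} * Ideal.span {α, β} ^ n).colon (Ideal.span {α ^ (n + 1)}) ↔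
      ∃ p : S[X], p.natDegree ≤ n + 1 ∧ p.coeff (n + 1) = x ∧
        MvPolynomial.eval ![α, β] (p.homogenize (n + 1)) = 0 := by
  rw [Ideal.mem_colon_span_singleton, Ideal.mem_span_singleton_mul]
  constructor
  · rintro ⟨z, hz, hxz⟩
    obtain ⟨q, hq, rfl⟩ := exists_eval_homogenize_eq_of_mem_span_pair_pow hz
    refine ⟨C x * X ^ (n + 1) - q, ?_, ?_, ?_⟩
    · exact (natDegree_sub_le _ _).trans (max_le (natDegree_C_mul_X_pow_le _ _) (by omega))
    · simp [coeff_eq_zero_of_natDegree_lt (Nat.lt_succ_of_le hq)]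
    · rw [homogenize_sub, map_sub, eval_homogenize_C_mul_X_pow,
        eval_homogenize_succ_of_natDegree_le hq, hxz, sub_self]
  · rintro ⟨p, hp, rfl, hp0⟩
    set q := p - C (p.coeff (n + 1)) * X ^ (n + 1)
    have hq : q.natDegree ≤ n := natDegree_sub_C_coeff_mul_X_pow_le hp
    refine ⟨-MvPolynomial.eval ![α, β] (q.homogenize n),
      neg_mem (eval_homogenize_mem_span_pair_pow q n), ?_⟩
    have hsplit : p = C (p.coeff (n + 1)) * X ^ (n + 1) + q := by ring
    rw [hsplit, homogenize_add, map_add, eval_homogenize_C_mul_X_pow,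
      eval_homogenize_succ_of_natDegree_le hq] at hp0
    linear_combination -hp0

section Evaluation

variable {K : Type*} [Field K] {ψ : S →+* K} {lam : K}

lemma map_eval_homogenize (hrep : lam * ψ β = ψ α) (hβ : ψ β ≠ 0) {p : S[X]} {n : ℕ}
    (hp : p.natDegree ≤ n) :
    ψ (MvPolynomial.eval ![α, β] (p.homogenize n)) = p.eval₂ ψ lam * ψ β ^ n := by
  have hv : ψ ∘ ![α, β] = ![ψ α, ψ β] := by ext i; fin_cases i <;> rfl
  rw [MvPolynomial.eval₂_comp, hv, ← MvPolynomial.eval_map, ← homogenize_map,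
    eval_homogenize (natDegree_map_le.trans hp) _ hβ, eval_map]
  simp [eq_div_of_mul_eq hβ hrep]

lemma eval₂_eq_zero_iff_eval_homogenize_eq_zero (hψ : Function.Injective ψ)
    (hrep : lam * ψ β = ψ α) (hβ : ψ β ≠ 0) {p : S[X]} {n : ℕ} (hp : p.natDegree ≤ n) :
    p.eval₂ ψ lam = 0 ↔ MvPolynomial.eval ![α, β] (p.homogenize n) = 0 := by
  rw [← hψ.eq_iff, map_zero, map_eval_homogenize hrep hβ hp, mul_eq_zero,
    or_iff_left (pow_ne_zero n hβ)]

end Evaluation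

end Polynomial

lemma Ideal.sup_pow_add_one {S : Type*} [CommSemiring S] (A B : Ideal S) (n : ℕ) :
    (A ⊔ B) ^ (n + 1) = A ^ (n + 1) ⊔ B * (A ⊔ B) ^ n := by
  refine le_antisymm ?_ (sup_le (Ideal.pow_right_mono le_sup_left _) ?_)
  · induction n with
    | zero => simp
    | succ n ih =>
      calc (A ⊔ B) ^ (n + 2) = A * (A ⊔ B) ^ (n + 1) ⊔ B * (A ⊔ B) ^ (n + 1) := by
            rw [pow_succ' _ (n + 1), Ideal.sup_mul]
        _ ≤ A * (A ^ (n + 1) ⊔ B * (A ⊔ B) ^ n) ⊔ B * (A ⊔ B) ^ (n + 1) :=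
            sup_le_sup_right (Ideal.mul_mono_right ih) _
        _ ≤ A ^ (n + 2) ⊔ B * (A ⊔ B) ^ (n + 1) := by
            rw [Ideal.mul_sup, ← pow_succ', mul_left_comm, pow_succ' (A ⊔ B) n]
            exact sup_le (sup_le_sup_left (Ideal.mul_mono_right
              (Ideal.mul_mono_left le_sup_left)) _) le_sup_right
  · rw [pow_succ']
    exact Ideal.mul_mono_left le_sup_right

lemma Ideal.colon_span_singleton_mul {S : Type*} [CommRing S] {β : S}
    (hβ : β ∈ nonZeroDivisors S) (J : Ideal S) :
    (Ideal.span {β} * J).colon (Ideal.span {β}) = J := by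
  ext x
  rw [Ideal.mem_colon_span_singleton, Ideal.mem_span_singleton_mul]
  refine ⟨fun ⟨z, hz, hzx⟩ => ?_, fun hx => ⟨x, hx, mul_comm _ _⟩⟩
  rwa [← (mul_cancel_left_mem_nonZeroDivisors hβ).mp (hzx.trans (mul_comm x β))]

lemma mem_map_pei_ker_eval₂_iff {k : Type} [Field k] {σ : Type} {S K : Type*} [CommRing S]
    [CommRing K] {π : MvPolynomial σ k →+* S} (hπ : Function.Surjective π) (ψ : S →+* K)
    (lam : K) (i : ℕ) {x : S} :
    x ∈ (pei (RingHom.ker (eval₂RingHom (ψ.comp π) lam)) i).map π ↔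
      ∃ p : S[X], p.natDegree ≤ i ∧ p.coeff i = x ∧ p.eval₂ ψ lam = 0 := by
  simp only [Ideal.mem_map_iff_of_surjective π hπ, pei, Ktilde, Submodule.mem_map,
    Submodule.mem_inf, Submodule.restrictScalars_mem, RingHom.mem_ker, coe_eval₂RingHom,
    mem_degreeLE, ← natDegree_le_iff_degree_le]
  constructor
  · rintro ⟨_, ⟨q, ⟨hq0, hq⟩, rfl⟩, rfl⟩
    exact ⟨q.map π, natDegree_map_le.trans hq, Polynomial.coeff_map _ _,
      by rwa [Polynomial.eval₂_map]⟩
  · rintro ⟨p, hp, rfl, hp0⟩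
    obtain ⟨q, rfl, hq⟩ := exists_natDegree_eq_of_mem_lifts (mem_lifts_of_surjective hπ p)
    exact ⟨q.coeff i, ⟨q, ⟨by rwa [Polynomial.eval₂_map] at hp0, hq ▸ hp⟩, rfl⟩,
      (Polynomial.coeff_map _ _).symm⟩

theorem unprojection_diagram_general
    {k : Type} [Field k] {σ : Type}
    (IY : Ideal (MvPolynomial σ k))
    (hIYprime : IY.IsPrime)
    (lam : FractionRing (MvPolynomial σ k ⧸ IY))
    (a f : MvPolynomial σ k)
    (hfY : f ∉ IY)
    (hrep : lam * algebraMap (MvPolynomial σ k ⧸ IY) _ (Ideal.Quotient.mk IY f)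
      = algebraMap (MvPolynomial σ k ⧸ IY) _ (Ideal.Quotient.mk IY a))
    (φ : Polynomial (MvPolynomial σ k) →+* FractionRing (MvPolynomial σ k ⧸ IY))
    (hφ : φ = Polynomial.eval₂RingHom
      ((algebraMap (MvPolynomial σ k ⧸ IY) (FractionRing (MvPolynomial σ k ⧸ IY))).comp
        (Ideal.Quotient.mk IY)) lam)
    (i : ℕ) (hi : 1 ≤ i)
    (Jf : Ideal (MvPolynomial σ k ⧸ IY))
    (hJf : Jf = Ideal.span {Ideal.Quotient.mk IY f}
      * (Ideal.span {Ideal.Quotient.mk IY a, Ideal.Quotient.mk IY f}) ^ (i - 1)) :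
    -- first row: left exactness (injectivity of multiplication by `āⁱ` out of `R/K_i`)
    Submodule.colon Jf (Ideal.span {(Ideal.Quotient.mk IY a) ^ i})
        = Ideal.map (Ideal.Quotient.mk IY) (pei (RingHom.ker φ) i) ∧
    -- first row: exactness at the middle term
    Ideal.span {(Ideal.Quotient.mk IY a) ^ i} ⊔ Jf
        = (Ideal.span {Ideal.Quotient.mk IY a, Ideal.Quotient.mk IY f}) ^ i ∧
    -- second row: left exactness (injectivity of multiplication by `f̄`)
    Submodule.colon Jf (Ideal.span {Ideal.Quotient.mk IY f})
        = (Ideal.span {Ideal.Quotient.mk IY a, Ideal.Quotient.mk IY f}) ^ (i - 1) ∧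
    -- second row: exactness at the middle term
    Jf ≤ Ideal.span {Ideal.Quotient.mk IY f} := by
  have := (Ideal.Quotient.isDomain_iff_prime IY).mpr hIYprime
  obtain ⟨n, rfl⟩ : ∃ n, i = n + 1 := ⟨i - 1, by omega⟩
  subst hφ hJf
  rw [Nat.add_sub_cancel]
  have hf : Ideal.Quotient.mk IY f ∈ nonZeroDivisors _ :=
    mem_nonZeroDivisors_of_ne_zero (by rwa [Ne, Ideal.Quotient.eq_zero_iff_mem])
  have hψf : algebraMap _ (FractionRing (MvPolynomial σ k ⧸ IY)) (Ideal.Quotient.mk IY f) ≠ 0 :=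
    IsFractionRing.to_map_ne_zero_of_mem_nonZeroDivisors hf
  refine ⟨?_, ?_, Ideal.colon_span_singleton_mul hf _, Ideal.mul_le_left⟩
  · ext x
    rw [Polynomial.mem_colon_span_pow_iff_exists_homogenize,
      mem_map_pei_ker_eval₂_iff Ideal.Quotient.mk_surjective]
    refine exists_congr fun p => and_congr_right fun hp => and_congr_right fun _ => ?_
    exact (Polynomial.eval₂_eq_zero_iff_eval_homogenize_eq_zero
      (IsFractionRing.injective _ _) hrep hψf hp).symm
  · rw [← Ideal.span_singleton_pow, Ideal.span_insert, Ideal.sup_pow_add_one]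

/-- In the unprojection setting, for each `i ≥ 1` there is a
commutative diagram with exact rows
`0 → (R/K_i)(−i(deg f+1)) →^{āⁱ} S_Y/(f̄·(ā,f̄)^{i-1}) → S_Y/(ā,f̄)ⁱ → 0` and
`0 → (S_Y/(ā,f̄)^{i-1})(−deg f) →^{f̄} S_Y/(f̄·(ā,f̄)^{i-1}) → S_Y/(f̄) → 0`.
Exactness of the two rows is encoded ideal-theoretically: with
`Jf = (f̄)·(ā,f̄)^{i-1}`, exactness of the first row at the left and middle is
`(Jf : āⁱ) = K_i/K₀` and `(āⁱ) ⊔ Jf = (ā,f̄)ⁱ`; exactness of the second row is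
`(Jf : f̄) = (ā,f̄)^{i-1}` and `Jf ⊆ (f̄)` (the right-hand maps being the
canonical surjections of quotients). -/
theorem unprojection_diagram
    {k : Type} [Field k] {σ : Type}
    (IY : Ideal (MvPolynomial σ k))
    (hIYprime : IY.IsPrime)
    (hIYhom : ∀ f ∈ IY, ∀ n, homogeneousComponent n f ∈ IY)
    (hIYlin : ∀ f ∈ IY, f.IsHomogeneous 1 → f = 0)
    (lam : FractionRing (MvPolynomial σ k ⧸ IY))
    (a f : MvPolynomial σ k) (d : ℕ)
    (ha : a.IsHomogeneous (d + 1)) (hf : f.IsHomogeneous d) (hfY : f ∉ IY)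
    (hrep : lam * algebraMap (MvPolynomial σ k ⧸ IY) _ (Ideal.Quotient.mk IY f)
      = algebraMap (MvPolynomial σ k ⧸ IY) _ (Ideal.Quotient.mk IY a))
    (hfake : lam ∉ (algebraMap (MvPolynomial σ k ⧸ IY)
      (FractionRing (MvPolynomial σ k ⧸ IY))).range)
    (φ : Polynomial (MvPolynomial σ k) →+* FractionRing (MvPolynomial σ k ⧸ IY))
    (hφ : φ = Polynomial.eval₂RingHom
      ((algebraMap (MvPolynomial σ k ⧸ IY) (FractionRing (MvPolynomial σ k ⧸ IY))).comp
        (Ideal.Quotient.mk IY)) lam)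
    (i : ℕ) (hi : 1 ≤ i)
    (Jf : Ideal (MvPolynomial σ k ⧸ IY))
    (hJf : Jf = Ideal.span {Ideal.Quotient.mk IY f}
      * (Ideal.span {Ideal.Quotient.mk IY a, Ideal.Quotient.mk IY f}) ^ (i - 1)) :
    -- first row: left exactness (injectivity of multiplication by `āⁱ` out of `R/K_i`)
    Submodule.colon Jf (Ideal.span {(Ideal.Quotient.mk IY a) ^ i})
        = Ideal.map (Ideal.Quotient.mk IY) (pei (RingHom.ker φ) i) ∧
    -- first row: exactness at the middle term
    Ideal.span {(Ideal.Quotient.mk IY a) ^ i} ⊔ Jf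
        = (Ideal.span {Ideal.Quotient.mk IY a, Ideal.Quotient.mk IY f}) ^ i ∧
    -- second row: left exactness (injectivity of multiplication by `f̄`)
    Submodule.colon Jf (Ideal.span {Ideal.Quotient.mk IY f})
        = (Ideal.span {Ideal.Quotient.mk IY a, Ideal.Quotient.mk IY f}) ^ (i - 1) ∧
    -- second row: exactness at the middle term
    Jf ≤ Ideal.span {Ideal.Quotient.mk IY f} :=
  unprojection_diagram_general IY hIYprime lam a f hfY hrep φ hφ i hi Jf hJf
end
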